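/- arXiv:2506.12150 — 2 statements merged into one kernel-verified Lean document; each statement's English description precedes it below -/
import Mathlib

section
/- Every nonempty word w over a linearly ordered finite alphabet factors uniquely as a concatenation w = l₁ l₂ ⋯ l_m of Lyndon words with l₁ ≥ l₂ ≥ ⋯ ≥ l_m in lexicographic order (Chen–Fox–Lyndon theorem). -/
/-!
Existence: if `l₁ ≥ ⋯ ≥ l_m` factors `w` and `a` is a letter, start from the Lyndon word `[a]` and
absorb `l₁, l₂, …` while the current word is smaller than the next factor; the concatenation of
Lyndon words `u < v` is again Lyndon, so this yields a factorization of `a :: w`.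

Uniqueness: the first factor `l₁` of any such factorization is the longest Lyndon prefix of `w`.
A Lyndon prefix `p` longer than `l₁` ends inside some later factor `l_k`, so it has a proper
suffix `s` that is a prefix of `l_k`, whence `p < s ≤ l_k ≤ l₁ ≤ p`.
-/

def IsLyndon {α : Type*} [LinearOrder α] (w : List α) : Prop :=
  w ≠ [] ∧ ∀ u v : List α, w = u ++ v → u ≠ [] → v ≠ [] → w < v

namespace List

theorem append_lt_append_of_lt_of_not_prefix {α : Type*} [LT α] {u v : List α} (h : u < v)
    (hp : ¬u <+: v) (x y : List α) : u ++ x < v ++ y := by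
  induction u generalizing v with
  | nil => exact absurd nil_prefix hp
  | cons a u ih =>
    cases v with
    | nil => exact absurd h (not_lt_nil _)
    | cons b v =>
      cases (show Lex (· < ·) (a :: u) (b :: v) from h) with
      | rel hab => exact Lex.rel hab
      | cons huv => exact Lex.cons (ih huv fun hpre => hp (cons_prefix_cons.mpr ⟨rfl, hpre⟩))

/-- `IsPrefix.le` for Mathlib's `LinearOrder (List α)`, whose `≤` is not core's `¬ v < u`. -/
theorem IsPrefix.le' {α : Type*} [LinearOrder α] {u v : List α} (h : u <+: v) : u ≤ v :=
  not_lt.mp h.le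

theorem exists_suffix_le_of_prefix_flatten {α : Type*} [LinearOrder α] {c q : List α}
    {t : List (List α)} (ht : ∀ x ∈ t, x ≤ c) (hq : q ≠ []) (hqt : q <+: t.flatten) :
    ∃ s, s ≠ [] ∧ s <:+ q ∧ s ≤ c := by
  induction t generalizing q with
  | nil => exact absurd (prefix_nil.mp hqt) hq
  | cons b t ih =>
    rw [flatten_cons] at hqt
    by_cases hqb : q <+: b
    · exact ⟨q, hq, suffix_refl q, hqb.le'.trans (ht b mem_cons_self)⟩
    · obtain ⟨r, rfl⟩ := (prefix_or_prefix_of_prefix hqt (prefix_append b _)).resolve_left hqb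
      have hr : r ≠ [] := by
        rintro rfl
        exact hqb (by simp)
      obtain ⟨s, hs, hsr, hsc⟩ := ih (fun x hx => ht x (mem_cons_of_mem b hx)) hr
        ((prefix_append_right_inj b).mp hqt)
      exact ⟨s, hs, hsr.trans (suffix_append b r), hsc⟩

end List

section Lyndon

variable {α : Type*} [LinearOrder α]

theorem isLyndon_singleton (a : α) : IsLyndon [a] := by
  refine ⟨List.cons_ne_nil a [], fun u v h hu hv => ?_⟩
  have hlen := congrArg List.length h
  have := List.length_pos_iff.mpr hu
  have := List.length_pos_iff.mpr hv
  simp only [List.length_singleton, List.length_append] at hlen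
  omega

namespace IsLyndon

theorem append_lt_of_lt {u v : List α} (hv : IsLyndon v) (hu : u ≠ []) (h : u < v) :
    u ++ v < v := by
  by_cases hp : u <+: v
  · obtain ⟨t, rfl⟩ := hp
    have ht : t ≠ [] := by
      rintro rfl
      simp at h
    exact List.append_left_lt (hv.2 u t rfl hu ht)
  · simpa using List.append_lt_append_of_lt_of_not_prefix h hp v []

theorem append {u v : List α} (hu : IsLyndon u) (hv : IsLyndon v) (h : u < v) :
    IsLyndon (u ++ v) := by
  refine ⟨by simp [hu.1], fun p s heq hp hs => ?_⟩
  have huv : u ++ v < v := hv.append_lt_of_lt hu.1 h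
  rcases List.append_eq_append_iff.mp heq with ⟨a, rfl, rfl⟩ | ⟨c, rfl, rfl⟩
  · rcases eq_or_ne a [] with rfl | ha
    · simpa using huv
    · exact huv.trans (hv.2 a s rfl ha hs)
  · rcases eq_or_ne c [] with rfl | hc
    · simpa using huv
    · refine List.append_lt_append_of_lt_of_not_prefix (hu.2 p c rfl hp hc) (fun hpre => ?_) v v
      have hlen := hpre.length_le
      have := List.length_pos_iff.mpr hp
      simp only [List.length_append] at hlen
      omega

theorem length_le_of_prefix_append_flatten {a p : List α} {t : List (List α)} (hp : IsLyndon p)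
    (ha : a ≠ []) (ht : ∀ x ∈ t, x ≤ a) (hpre : p <+: a ++ t.flatten) :
    p.length ≤ a.length := by
  by_contra! hlen
  obtain ⟨q, rfl⟩ := List.prefix_of_prefix_length_le (List.prefix_append a _) hpre hlen.le
  have hq : q ≠ [] := by
    rintro rfl
    simp at hlen
  obtain ⟨s, hs, ⟨r, rfl⟩, hsa⟩ :=
    List.exists_suffix_le_of_prefix_flatten ht hq ((List.prefix_append_right_inj a).mp hpre)
  have hps : a ++ (r ++ s) < s := hp.2 (a ++ r) s (by simp) (by simp [ha]) hs
  exact lt_irrefl _ (hps.trans_le (hsa.trans (List.prefix_append a _).le'))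

end IsLyndon

def IsLyndonFactorization (l : List (List α)) : Prop :=
  (∀ x ∈ l, IsLyndon x) ∧ l.IsChain (· ≥ ·)

namespace IsLyndonFactorization

theorem tail {a : List α} {t : List (List α)} (h : IsLyndonFactorization (a :: t)) :
    IsLyndonFactorization t :=
  ⟨fun x hx => h.1 x (List.mem_cons_of_mem a hx), h.2.tail⟩

theorem le_head {a : List α} {t : List (List α)} (h : IsLyndonFactorization (a :: t)) :
    ∀ x ∈ t, x ≤ a :=
  (List.pairwise_cons.mp (List.isChain_iff_pairwise.mp h.2)).1

theorem eq_nil_of_flatten_eq_nil {l : List (List α)} (h : IsLyndonFactorization l)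
    (hl : l.flatten = []) : l = [] :=
  List.eq_nil_iff_forall_not_mem.mpr fun x hx => (h.1 x hx).1 (List.flatten_eq_nil_iff.mp hl x hx)

theorem exists_flatten_eq_append {u : List α} {t : List (List α)} (hu : IsLyndon u)
    (ht : IsLyndonFactorization t) :
    ∃ l, IsLyndonFactorization l ∧ l.flatten = u ++ t.flatten := by
  induction t generalizing u with
  | nil => exact ⟨[u], ⟨by simpa using hu, List.isChain_singleton u⟩, by simp⟩
  | cons b t ih =>
    by_cases hub : u < b
    · obtain ⟨l, hl, hflat⟩ := ih (hu.append (ht.1 b List.mem_cons_self) hub) ht.tail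
      exact ⟨l, hl, by simp [hflat]⟩
    · exact ⟨u :: b :: t, ⟨List.forall_mem_cons.mpr ⟨hu, ht.1⟩, ht.2.cons_cons (not_lt.mp hub)⟩,
        rfl⟩

theorem exists_flatten_eq (w : List α) : ∃ l, IsLyndonFactorization l ∧ l.flatten = w := by
  induction w with
  | nil => exact ⟨[], ⟨by simp, List.isChain_nil⟩, rfl⟩
  | cons a w ih =>
    obtain ⟨t, ht, rfl⟩ := ih
    exact exists_flatten_eq_append (isLyndon_singleton a) ht

theorem eq_of_flatten_eq {l l' : List (List α)} (hl : IsLyndonFactorization l)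
    (hl' : IsLyndonFactorization l') (h : l.flatten = l'.flatten) : l = l' := by
  induction l generalizing l' with
  | nil => exact (hl'.eq_nil_of_flatten_eq_nil h.symm).symm
  | cons a t ih =>
    cases l' with
    | nil => exact hl.eq_nil_of_flatten_eq_nil h
    | cons a' t' =>
      have ha := hl.1 a List.mem_cons_self
      have ha' := hl'.1 a' List.mem_cons_self
      have hle : a'.length ≤ a.length :=
        ha'.length_le_of_prefix_append_flatten ha.1 hl.le_head ⟨t'.flatten, h.symm⟩
      have hge : a.length ≤ a'.length :=
        ha.length_le_of_prefix_append_flatten ha'.1 hl'.le_head ⟨t.flatten, h⟩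
      obtain ⟨rfl, htt⟩ := List.append_inj h (le_antisymm hge hle)
      rw [ih hl.tail hl'.tail htt]

end IsLyndonFactorization

end Lyndon

theorem chen_fox_lyndon_general {α : Type*} [LinearOrder α] (w : List α) :
    ∃! l : List (List α),
      (∀ x ∈ l, IsLyndon x) ∧ l.Chain' (fun a b => b ≤ a) ∧ l.flatten = w := by
  obtain ⟨l, hl, rfl⟩ := IsLyndonFactorization.exists_flatten_eq w
  refine ⟨l, ⟨hl.1, hl.2, rfl⟩, fun l' ⟨h₁, h₂, h₃⟩ => ?_⟩
  exact IsLyndonFactorization.eq_of_flatten_eq ⟨h₁, h₂⟩ hl h₃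

/-- Chen–Fox–Lyndon theorem: every nonempty word factors uniquely as a
lexicographically nonincreasing concatenation of Lyndon words. -/
theorem chen_fox_lyndon {α : Type*} [LinearOrder α] (w : List α) (hw : w ≠ []) :
    ∃! l : List (List α),
      (∀ x ∈ l, IsLyndon x) ∧ l.Chain' (fun a b => b ≤ a) ∧ l.flatten = w :=
  chen_fox_lyndon_general w
end

section
/- A nonempty word w over a linearly ordered alphabet is a Lyndon word if and only if for every nontrivial factorization w = v·u with u, v nonempty, one has w < u·v in lexicographic order. -/
private lemma lex_append_of_lt_of_not_prefix {α : Type*} [LinearOrder α] :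
    ∀ {a b : List α}, a < b → ¬ a <+: b → ∀ c d : List α, a ++ c < b ++ d := by
  intro a b h
  have h' : List.Lex (· < ·) a b := h
  clear h
  induction h' with
  | nil => intro hp; exact absurd (List.nil_prefix) hp
  | @cons x a' b' h' ih =>
      intro hp c d
      have hp' : ¬ a' <+: b' := fun h'' => hp (List.cons_prefix_cons.mpr ⟨rfl, h''⟩)
      exact List.Lex.cons (ih hp' c d)
  | @rel x a' y b' hxy =>
      intro _ c d
      exact List.Lex.rel hxy

private lemma lex_of_append_lt_append {α : Type*} [LinearOrder α] :
    ∀ (v : List α) {a b : List α}, v ++ a < v ++ b → a < b := by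
  intro v
  induction v with
  | nil => intro a b h; exact h
  | cons x v' ih =>
      intro a b h
      have h' : List.Lex (· < ·) (x :: (v' ++ a)) (x :: (v' ++ b)) := h
      cases h' with
      | cons h'' => exact ih h''
      | rel h'' => exact absurd h'' (lt_irrefl x)

/-- A nonempty word `w` is Lyndon iff for every nontrivial factorization
`w = v ++ u` with `u, v` nonempty, `w < u ++ v` lexicographically. -/
theorem isLyndon_iff_lt_rotations {α : Type*} [LinearOrder α] (w : List α) (hw : w ≠ []) :
    IsLyndon w ↔
      ∀ u v : List α, u ≠ [] → v ≠ [] → w = v ++ u → w < u ++ v := by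
  constructor
  · rintro ⟨-, hL⟩ u v hu hv heq
    have h1 : w < u := hL v u heq hv hu
    have hlen : u.length < w.length := by
      subst heq; simp [List.length_append]
      exact List.length_pos_iff.mpr hv
    have hnp : ¬ w <+: u := fun hp => absurd hp.length_le (not_le.mpr hlen)
    have := lex_append_of_lt_of_not_prefix h1 hnp [] v
    simpa using this
  · intro h
    refine ⟨hw, ?_⟩
    intro u v heq hu hv
    have h1 : w < v ++ u := h v u hv hu heq
    by_cases hvw : v <+: w
    · -- derive a contradiction
      obtain ⟨t, hwt⟩ := hvw
      have ht : t ≠ [] := by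
        rintro rfl
        apply hu
        have h5 := congrArg List.length (heq.symm.trans hwt.symm)
        simp only [List.length_append, List.append_nil, List.length_nil] at h5
        exact List.length_eq_zero_iff.mp (by omega)
      have htu : t < u := lex_of_append_lt_append v (by rw [← hwt] at h1; exact h1)
      have hlen : t.length = u.length := by
        have h5 := congrArg List.length (heq.symm.trans hwt.symm)
        simp only [List.length_append] at h5
        omega
      have hnp : ¬ t <+: u := fun hp => (ne_of_lt htu) (List.IsPrefix.eq_of_length hp hlen)
      have h2 : w < t ++ v := h t v ht hv hwt.symm
      have h3 : u ++ v < t ++ v := by rw [heq] at h2; exact h2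
      have h4 : t ++ v < u ++ v := lex_append_of_lt_of_not_prefix htu hnp v v
      exact absurd h3 (lt_asymm h4)
    · by_contra hne
      have hvltw : v < w := by
        rcases lt_or_eq_of_le (le_of_not_gt hne) with h' | h'
        · exact h'
        · exfalso
          apply hu
          rw [h'] at heq
          have h5 := congrArg List.length heq
          rw [List.length_append] at h5
          exact List.length_eq_zero_iff.mp (by omega)
      have := lex_append_of_lt_of_not_prefix hvltw hvw u []
      simp at this
      exact absurd h1 (lt_asymm this)
end
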